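/- Let α > 0, let 𝔨_α be the Lie algebra on ℝ⁷ with structure equations de¹ = −α e¹⁷, de² = −2 e³⁵, de³ = −e²⁵ − e⁵⁷, de⁴ = (α/2) e⁴⁷ − e⁶⁷, de⁵ = e²³ + e³⁷, de⁶ = e⁴⁷ + (α/2) e⁶⁷, de⁷ = 0, let φ_α = (α/2)(e¹²⁷ + e³⁴⁷ + e⁵⁶⁷) + e¹³⁵ − e¹⁴⁶ − e²³⁶ − e²⁴⁵, and let τ_α = 4 e¹² − 2 e³⁴ − 2 e⁵⁶. Then there exists a derivation D of 𝔨_α such that dτ_α = 6 φ_α + D.φ_α; i.e., φ_α is an expanding algebraic Laplacian soliton on 𝔨_α with λ = 6. -/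

import Mathlib

/-!
Common framework: unbundled exterior forms on ℝ⁷, wedge product, interior product,
Chevalley–Eilenberg differential of a Lie bracket, induced inner products on forms,
derived series, and the Lie algebras / G₂-structures from the paper
"Laplacian flow solitons on non-solvable Lie groups" (Fino–Raffero).
-/

open scoped BigOperators

namespace G2Solitons

/-- The underlying vector space ℝ⁷. -/
abbrev V7 : Type := Fin 7 → ℝ

/-- Unbundled `k`-forms: real-valued functions of `k` vectors of ℝ⁷. -/
abbrev Form (k : ℕ) : Type := (Fin k → V7) → ℝ

/-- Standard basis of ℝ⁷. -/
def stdB (i : Fin 7) : V7 := fun j => if j = i then 1 else 0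

/-- The basic `k`-form `e^{i₁} ∧ ⋯ ∧ e^{i_k}` (determinant convention, 0-indexed). -/
def eB {k : ℕ} (idx : Fin k → Fin 7) : Form k :=
  fun v => Matrix.det (Matrix.of fun a b : Fin k => v a (idx b))

/-- Wedge product of a `p`-form and a `q`-form (convention
`(α∧β)(v) = (p!q!)⁻¹ ∑_σ sgn σ · α(v∘σ|_{first p}) β(v∘σ|_{last q})`). -/
noncomputable def wedge {p q : ℕ} (α : Form p) (β : Form q) : Form (p + q) := fun v =>
  ((p.factorial * q.factorial : ℕ) : ℝ)⁻¹ *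
    ∑ σ : Equiv.Perm (Fin (p + q)),
      ((Equiv.Perm.sign σ : ℤ) : ℝ) *
        (α (fun i => v (σ (Fin.castAdd q i))) * β (fun j => v (σ (Fin.natAdd p j))))

/-- Interior product of a vector with a `(k+1)`-form. -/
def iprod {k : ℕ} (u : V7) (α : Form (k + 1)) : Form k := fun v => α (Fin.cons u v)

/-- Chevalley–Eilenberg differential of a `(k+1)`-form with respect to a bracket:
`(dα)(x₀,…,x_{k+1}) = ∑_{i<j} (-1)^{i+j} α([xᵢ,xⱼ], x₀,…,x̂ᵢ,…,x̂ⱼ,…,x_{k+1})`. -/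
def dCE {k : ℕ} (br : V7 → V7 → V7) (α : Form (k + 1)) : Form (k + 2) := fun v =>
  ∑ i : Fin (k + 2), ∑ j : Fin (k + 2),
    if (i : ℕ) < (j : ℕ) then
      (-1 : ℝ) ^ ((i : ℕ) + (j : ℕ)) *
        α (Fin.cons (br (v i) (v j)) fun l : Fin k =>
            if (l : ℕ) < (i : ℕ) then v ⟨(l : ℕ), by omega⟩
            else if (l : ℕ) + 1 < (j : ℕ) then v ⟨(l : ℕ) + 1, by omega⟩
            else v ⟨(l : ℕ) + 2, by omega⟩)
    else 0

/-- Inner product on `k`-forms induced by the diagonal metric `g = ∑ᵢ c i (e^i)²`,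
determined by declaring `{(c i₁ ⋯ c i_k)^{-1/2} e^{i₁⋯i_k} : i₁ < ⋯ < i_k}` orthonormal. -/
noncomputable def formInner (c : Fin 7 → ℝ) {k : ℕ} (α β : Form k) : ℝ :=
  ((k.factorial : ℕ) : ℝ)⁻¹ *
    ∑ f : Fin k → Fin 7,
      (∏ i, c (f i))⁻¹ * (α (fun i => stdB (f i)) * β (fun i => stdB (f i)))

/-- Natural action of an endomorphism `D` on a `k`-form:
`(D.α)(v₁,…,v_k) = ∑ᵢ α(v₁,…,D vᵢ,…,v_k)`. -/
def actD {k : ℕ} (D : V7 → V7) (α : Form k) : Form k := fun v =>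
  ∑ i : Fin k, α (Function.update v i (D (v i)))

/-- The Jacobi identity for a bilinear bracket. -/
def Jacobi (br : V7 → V7 → V7) : Prop :=
  ∀ x y z : V7, br (br x y) z + br (br y z) x + br (br z x) y = 0

/-- Unimodularity: `tr (ad x) = 0` for all `x`. -/
def Unimodular (br : V7 → V7 → V7) : Prop :=
  ∀ x : V7, ∑ i : Fin 7, br x (stdB i) i = 0

/-- Derivation property for a map `D`. -/
def IsDeriv (br : V7 → V7 → V7) (D : V7 → V7) : Prop :=
  ∀ x y : V7, D (br x y) = br (D x) y + br x (D y)

/-- Derived series of a bracket. -/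
def derSeries (br : V7 → V7 → V7) : ℕ → Submodule ℝ V7
  | 0 => ⊤
  | n + 1 => Submodule.span ℝ
      {z | ∃ x ∈ derSeries br n, ∃ y ∈ derSeries br n, z = br x y}

/-- Solvability: the derived series terminates at zero. -/
def Solvable (br : V7 → V7 → V7) : Prop := ∃ n, derSeries br n = ⊥

/-- Real cube root (the real root, also for negative arguments). -/
noncomputable def cbrt (x : ℝ) : ℝ :=
  if x < 0 then -((-x) ^ ((1 : ℝ) / 3)) else x ^ ((1 : ℝ) / 3)

/-- The standard volume form `e^{1234567}`. -/
def vol7 : Form 7 := eB ![0, 1, 2, 3, 4, 5, 6]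

end G2Solitons

namespace G2Solitons

noncomputable section

/-- The bracket of the Lie algebra `𝔨_α` with structure equations
`(-α e¹⁷, -2 e³⁵, -e²⁵ - e⁵⁷, (α/2) e⁴⁷ - e⁶⁷, e²³ + e³⁷, e⁴⁷ + (α/2) e⁶⁷, 0)`,
via the convention `dβ(x,y) = -β([x,y])`. -/
def brK (α : ℝ) : V7 → V7 → V7 := fun x y =>
  ![α * (x 0 * y 6 - x 6 * y 0),
    2 * (x 2 * y 4 - x 4 * y 2),
    (x 1 * y 4 - x 4 * y 1) + (x 4 * y 6 - x 6 * y 4),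
    -(α / 2) * (x 3 * y 6 - x 6 * y 3) + (x 5 * y 6 - x 6 * y 5),
    -(x 1 * y 2 - x 2 * y 1) - (x 2 * y 6 - x 6 * y 2),
    -(x 3 * y 6 - x 6 * y 3) - α / 2 * (x 5 * y 6 - x 6 * y 5),
    0]

/-- `φ_α = (α/2)(e¹²⁷ + e³⁴⁷ + e⁵⁶⁷) + e¹³⁵ - e¹⁴⁶ - e²³⁶ - e²⁴⁵`. -/
def phiK (α : ℝ) : Form 3 := fun v =>
  α / 2 * (eB ![0, 1, 6] v + eB ![2, 3, 6] v + eB ![4, 5, 6] v)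
    + eB ![0, 2, 4] v - eB ![0, 3, 5] v - eB ![1, 2, 5] v - eB ![1, 3, 4] v

/-- Diagonal coefficients of the metric `g_{φ_α} = ∑_{i=1}^{6} (e^i)² + (α²/4)(e⁷)²`. -/
def cK (α : ℝ) : Fin 7 → ℝ := ![1, 1, 1, 1, 1, 1, α ^ 2 / 4]

/-- The metric `g_{φ_α}` as a bilinear form. -/
def gK (α : ℝ) (u v : V7) : ℝ := ∑ i : Fin 7, cK α i * u i * v i

/-- The volume form `dV_{φ_α} = (α/2) e¹²³⁴⁵⁶⁷`. -/
def dVK (α : ℝ) : Form 7 := fun v => α / 2 * vol7 v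

/-- `τ_α = 4 e¹² - 2 e³⁴ - 2 e⁵⁶`. -/
def tauK : Form 2 := fun v =>
  4 * eB ![0, 1] v - 2 * eB ![2, 3] v - 2 * eB ![4, 5] v

/-- `D = diag(-2, 0, 0, 4, 0, 4, 0)`. -/
def DK : V7 → V7 := fun x i => (![-2, 0, 0, 4, 0, 4, 0] : Fin 7 → ℝ) i * x i

end

end G2Solitons

namespace G2Solitons

/-!
From the structure equations, `dτ_α = 4α e¹²⁷ + α (e³⁴⁷ + e⁵⁶⁷) + 8 e¹³⁵ - 2 e²³⁶ - 2 e²⁴⁵`,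
so `dτ_α - 6 φ_α` is a combination of the basic 3-forms occurring in `φ_α`. A diagonal
endomorphism `diag(d₁, …, d₇)` multiplies `e^{ijk}` by `dᵢ + dⱼ + dₖ` (a determinant identity),
and `diag(2, 0, 0, -4, 0, -4, 0)` produces exactly these coefficients from `φ_α`;
it is a derivation of `𝔨_α` because `dᵢ + dⱼ = d_k` whenever `e^{ij}` occurs in `de^k`.
-/

open Matrix

theorem _root_.Matrix.sum_det_updateRow_vecMul_diagonal {n R : Type*} [Fintype n]
    [DecidableEq n] [CommRing R] (M : Matrix n n R) (c : n → R) :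
    ∑ a, (M.updateRow a (M a ᵥ* diagonal c)).det = (diagonal c).trace * M.det := by
  simp only [det_apply', trace_diagonal, Finset.mul_sum]
  rw [Finset.sum_comm]
  refine Finset.sum_congr rfl fun σ _ => ?_
  have hprod (a : n) : ∏ i, M.updateRow a (M a ᵥ* diagonal c) (σ i) i =
      c (σ.symm a) * ∏ i, M (σ i) i := by
    have hfactor (i : n) : M.updateRow a (M a ᵥ* diagonal c) (σ i) i =
        (if i = σ.symm a then c i else 1) * M (σ i) i := by
      simp only [updateRow_apply, vecMul_diagonal, Equiv.eq_symm_apply]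
      split_ifs with h
      · rw [h, mul_comm]
      · rw [one_mul]
    simp only [hfactor, Finset.prod_mul_distrib, Finset.prod_ite_eq', Finset.mem_univ, if_true]
  simp only [hprod]
  rw [← Equiv.sum_comp σ.symm c, Finset.sum_mul]
  exact Finset.sum_congr rfl fun a _ => by ring

section actD

variable {k : ℕ} (D : V7 → V7)

theorem actD_add (α β : Form k) : actD D (α + β) = actD D α + actD D β := by
  funext v
  exact Finset.sum_add_distrib

theorem actD_sub (α β : Form k) : actD D (α - β) = actD D α - actD D β := by
  funext v
  exact Finset.sum_sub_distrib ..

theorem actD_smul (c : ℝ) (α : Form k) : actD D (c • α) = c • actD D α := by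
  funext v
  exact (Finset.mul_sum ..).symm

theorem actD_eB_of_diagonal (d : Fin 7 → ℝ) (hD : ∀ x i, D x i = d i * x i)
    (idx : Fin k → Fin 7) : actD D (eB idx) = (∑ a, d (idx a)) • eB idx := by
  funext v
  have hrow (a : Fin k) : (of fun r b => Function.update v a (D (v a)) r (idx b)) =
      (of fun r b => v r (idx b)).updateRow a
        ((of fun r b => v r (idx b)) a ᵥ* diagonal (d ∘ idx)) := by
    ext r b
    rcases eq_or_ne r a with rfl | h
    · simp [hD, vecMul_diagonal, mul_comm]
    · simp [h, updateRow_ne]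
  simp only [actD, eB, hrow, sum_det_updateRow_vecMul_diagonal, trace_diagonal,
    Pi.smul_apply, smul_eq_mul, Function.comp_apply]

end actD

theorem dCE_apply_two (br : V7 → V7 → V7) (α : Form 2) (v : Fin 3 → V7) :
    dCE br α v =
      -α ![br (v 0) (v 1), v 2] + α ![br (v 0) (v 2), v 1] - α ![br (v 1) (v 2), v 0] := by
  have hcons (x y : V7) : (Fin.cons x fun _ => y : Fin 2 → V7) = ![x, y] := by
    funext l
    fin_cases l <;> rfl
  simp [dCE, Fin.sum_univ_succ, hcons, sub_eq_add_neg, pow_succ]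

theorem dCE_brK_tauK (α : ℝ) :
    dCE (brK α) tauK = (4 * α) • eB ![0, 1, 6] + α • eB ![2, 3, 6] + α • eB ![4, 5, 6]
      + (8 : ℝ) • eB ![0, 2, 4] - (2 : ℝ) • eB ![1, 2, 5] - (2 : ℝ) • eB ![1, 3, 4] := by
  funext w
  simp only [dCE_apply_two, tauK, brK, eB, det_fin_two, det_fin_three, of_apply, cons_val_zero,
    cons_val_one, cons_val, Pi.add_apply, Pi.sub_apply, Pi.smul_apply, smul_eq_mul]
  ring

noncomputable def DKₗ : V7 →ₗ[ℝ] V7 := toLin' (diagonal ![-2, 0, 0, 4, 0, 4, 0])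

theorem coe_DKₗ : ⇑DKₗ = DK := by
  funext x i
  simp [DKₗ, DK, mulVec_diagonal]

theorem isDeriv_brK_neg_DK (α : ℝ) : IsDeriv (brK α) (-DK) := by
  intro x y
  funext i
  fin_cases i <;>
    simp only [brK, DK, Pi.add_apply, Pi.neg_apply, Fin.zero_eta, Fin.mk_one, Fin.reduceFinMk,
      cons_val_zero, cons_val_one, cons_val] <;> ring

theorem actD_neg_DK_phiK (α : ℝ) :
    actD (-DK) (phiK α) = α • eB ![0, 1, 6] - (2 * α) • eB ![2, 3, 6] - (2 * α) • eB ![4, 5, 6]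
      + (2 : ℝ) • eB ![0, 2, 4] + (6 : ℝ) • eB ![0, 3, 5] + (4 : ℝ) • eB ![1, 2, 5]
      + (4 : ℝ) • eB ![1, 3, 4] := by
  have hphi : phiK α = (α / 2) • (eB ![0, 1, 6] + eB ![2, 3, 6] + eB ![4, 5, 6])
      + eB ![0, 2, 4] - eB ![0, 3, 5] - eB ![1, 2, 5] - eB ![1, 3, 4] := rfl
  have hD (x : V7) (i : Fin 7) : (-DK) x i = (-![-2, 0, 0, 4, 0, 4, 0] : Fin 7 → ℝ) i * x i := by
    simp [DK]
  simp only [hphi, actD_add, actD_sub, actD_smul, actD_eB_of_diagonal _ _ hD]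
  funext w
  simp only [Fin.sum_univ_three, Pi.neg_apply, cons_val_zero, cons_val_one, cons_val, Pi.add_apply,
    Pi.sub_apply, Pi.smul_apply, smul_eq_mul]
  ring

theorem expanding_soliton_K_general (α : ℝ) :
    ∃ D : V7 →ₗ[ℝ] V7, IsDeriv (brK α) (⇑D) ∧
      ∀ w, dCE (brK α) tauK w = 6 * phiK α w + actD (⇑D) (phiK α) w := by
  -- The paper's `DK` acts on forms by `-φ(D·,·,·) - ⋯`, the opposite sign of `actD`.
  refine ⟨-DKₗ, ?_, fun w => ?_⟩ <;> rw [LinearMap.coe_neg, coe_DKₗ]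
  · exact isDeriv_brK_neg_DK α
  · rw [dCE_brK_tauK, actD_neg_DK_phiK]
    simp only [phiK, Pi.add_apply, Pi.sub_apply, Pi.smul_apply, smul_eq_mul]
    ring

/-- `dτ_α = 6 φ_α + D.φ_α` for some derivation `D`, i.e. `φ_α` is
an expanding algebraic Laplacian soliton with `λ = 6`. -/
theorem expanding_soliton_K (α : ℝ) (hα : 0 < α) :
    ∃ D : V7 →ₗ[ℝ] V7, IsDeriv (brK α) (⇑D) ∧
      ∀ w, dCE (brK α) tauK w = 6 * phiK α w + actD (⇑D) (phiK α) w :=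
  expanding_soliton_K_general α

end G2Solitons
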